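/- arXiv:2307.10531 — 3 statements merged into one kernel-verified Lean document; each statement's English description precedes it below -/
import Mathlib

section
/- Fix a positive sequence W. On the set of positive sequences I with 𝔠(W) < 𝔠(I), the map I ↦ D(W,I) is injective: I can be recovered from W and Ĩ = D(W,I) via the formula I_k = ((Ĩ_k − W_k)/W_k) · (W_{k-1} Ĩ_{k-1} / (Ĩ_{k-1} − W_{k-1})), noting that Ĩ_k > W_k for all k. -/
open Filter Topology

noncomputable section

/-- Left-tail logarithmic Cesàro limit of a bi-infinite positive sequence. -/
def cesaroLim (X : ℤ → ℝ) (c : ℝ) : Prop :=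
  Filter.Tendsto (fun n : ℕ => (∑ k ∈ Finset.range n, Real.log (X (-(k : ℤ)))) / (n : ℝ))
    Filter.atTop (nhds c)

/-- The `m`-th term of the series defining `J_k = Σ_{i ≤ k} W_i ∏_{j=i+1}^k (W_j / I_j)`,
corresponding to `i = k - m`. -/
def Jterm (W I : ℤ → ℝ) (k : ℤ) (m : ℕ) : ℝ :=
  W (k - (m : ℤ)) * ∏ r ∈ Finset.range m, (W (k - (r : ℤ)) / I (k - (r : ℤ)))

/-- `S(W,I)_k = Σ_{i ≤ k} W_i ∏_{j=i+1}^k (W_j / I_j)`. -/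
def Smap (W I : ℤ → ℝ) (k : ℤ) : ℝ := ∑' m : ℕ, Jterm W I k m

/-- The update map `D(W,I)_k = I_k J_k / J_{k-1}`. -/
def Dmap (W I : ℤ → ℝ) (k : ℤ) : ℝ := I k * Smap W I k / Smap W I (k - 1)

/-- The dual-weight map `R(W,I)_k = (I_k⁻¹ + J_{k-1}⁻¹)⁻¹`. -/
def Rmap (W I : ℤ → ℝ) (k : ℤ) : ℝ := ((I k)⁻¹ + (Smap W I (k - 1))⁻¹)⁻¹

section Aux

lemma const_div_nat (x : ℝ) : Tendsto (fun n : ℕ => x / (n : ℝ)) atTop (𝓝 0) := by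
  simpa using (tendsto_one_div_atTop_nhds_zero_nat).const_mul x |>.congr
    (fun n => by rw [mul_one_div])

lemma const_div_nat' (x : ℝ) : Tendsto (fun n : ℕ => x / ((n : ℝ) + 1)) atTop (𝓝 0) := by
  simpa using (tendsto_one_div_add_atTop_nhds_zero_nat).const_mul x |>.congr
    (fun n => by rw [mul_one_div])

lemma nat_div_succ : Tendsto (fun n : ℕ => (n : ℝ) / ((n : ℝ) + 1)) atTop (𝓝 1) := by
  have h : Tendsto (fun n : ℕ => 1 / ((n : ℝ) + 1)) atTop (𝓝 0) := tendsto_one_div_add_atTop_nhds_zero_nat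
  have := (tendsto_const_nhds (x := (1:ℝ)) (f := atTop)).sub h
  simp only [sub_zero] at this
  refine this.congr fun n => ?_
  have hn : (n : ℝ) + 1 ≠ 0 := by positivity
  field_simp
  ring

lemma succ_div_nat : Tendsto (fun n : ℕ => ((n : ℝ) + 1) / (n : ℝ)) atTop (𝓝 1) := by
  have h : Tendsto (fun n : ℕ => 1 / (n : ℝ)) atTop (𝓝 0) := tendsto_one_div_atTop_nhds_zero_nat
  have := (tendsto_const_nhds (x := (1:ℝ)) (f := atTop)).add h
  simp only [add_zero] at this
  refine this.congr' ?_
  filter_upwards [eventually_gt_atTop 0] with n hn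
  have hn' : (n : ℝ) ≠ 0 := by positivity
  field_simp

/-- a n / (n+1) → c -/
lemma aux_shift_down {a : ℕ → ℝ} {c : ℝ} (h : Tendsto (fun n : ℕ => a n / (n : ℝ)) atTop (𝓝 c)) :
    Tendsto (fun n : ℕ => a n / ((n : ℝ) + 1)) atTop (𝓝 c) := by
  have := h.mul nat_div_succ
  rw [mul_one] at this
  refine this.congr' ?_
  filter_upwards [eventually_gt_atTop 0] with n h0
  have h1 : (n : ℝ) ≠ 0 := by positivity
  have h2 : (n : ℝ) + 1 ≠ 0 := by positivity
  field_simp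

/-- a (n+1) / n → c -/
lemma aux_shift_up {a : ℕ → ℝ} {c : ℝ} (h : Tendsto (fun n : ℕ => a n / (n : ℝ)) atTop (𝓝 c)) :
    Tendsto (fun n : ℕ => a (n + 1) / (n : ℝ)) atTop (𝓝 c) := by
  have h1 : Tendsto (fun n : ℕ => a (n + 1) / ((n : ℝ) + 1)) atTop (𝓝 c) := by
    have := (tendsto_add_atTop_iff_nat 1).2 h
    refine this.congr fun n => ?_
    push_cast
    ring_nf
  have := h1.mul succ_div_nat
  rw [mul_one] at this
  refine this.congr fun n => ?_
  rcases Nat.eq_zero_or_pos n with h0 | h0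
  · subst h0; simp
  · have hn1 : (n : ℝ) ≠ 0 := by positivity
    have hn2 : (n : ℝ) + 1 ≠ 0 := by positivity
    field_simp

lemma shiftedCesaro {X : ℤ → ℝ} {c : ℝ} (hc : cesaroLim X c) (k : ℤ) :
    Tendsto (fun m : ℕ => (∑ r ∈ Finset.range m, Real.log (X (k - (r : ℤ)))) / (m : ℝ))
      atTop (𝓝 c) := by
  induction k using Int.induction_on with
  | zero => simpa [zero_sub, cesaroLim] using hc
  | succ i ih =>
      rw [← tendsto_add_atTop_iff_nat 1]
      have key : ∀ n : ℕ, (∑ r ∈ Finset.range (n + 1), Real.log (X ((i : ℤ) + 1 - (r : ℤ))))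
          = (∑ r ∈ Finset.range n, Real.log (X ((i : ℤ) - (r : ℤ)))) + Real.log (X ((i : ℤ) + 1)) := by
        intro n
        rw [Finset.sum_range_succ']
        push_cast
        rw [sub_zero]
        congr 1
        refine Finset.sum_congr rfl fun r _ => ?_
        rw [show (i:ℤ) + 1 - ((r:ℤ) + 1) = (i:ℤ) - (r:ℤ) by ring]
      have h1 := (aux_shift_down ih).add (const_div_nat' (Real.log (X ((i : ℤ) + 1))))
      rw [add_zero] at h1
      refine h1.congr fun n => ?_
      rw [show ((n + 1 : ℕ) : ℝ) = (n : ℝ) + 1 by push_cast; ring, key n, add_div]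
  | pred i ih =>
      have key : ∀ n : ℕ, (∑ r ∈ Finset.range n, Real.log (X (-(i : ℤ) - 1 - (r : ℤ))))
          = (∑ r ∈ Finset.range (n + 1), Real.log (X (-(i : ℤ) - (r : ℤ)))) - Real.log (X (-(i : ℤ))) := by
        intro n
        rw [Finset.sum_range_succ']
        push_cast
        rw [sub_zero, add_sub_cancel_right]
        refine Finset.sum_congr rfl fun r _ => ?_
        rw [show -(i:ℤ) - ((r:ℤ) + 1) = -(i:ℤ) - 1 - (r:ℤ) by ring]
      have h1 := (aux_shift_up ih).sub (const_div_nat (Real.log (X (-(i : ℤ)))))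
      rw [sub_zero] at h1
      refine h1.congr fun n => ?_
      rw [key n, sub_div]

/-- the single-term consequence: log X (k - n) / n → 0 -/
lemma shiftedCesaro_term {X : ℤ → ℝ} {c : ℝ} (hc : cesaroLim X c) (k : ℤ) :
    Tendsto (fun n : ℕ => Real.log (X (k - (n : ℤ))) / (n : ℝ)) atTop (𝓝 0) := by
  have h := shiftedCesaro hc k
  have h2 := (aux_shift_up h).sub h
  rw [sub_self] at h2
  refine h2.congr fun n => ?_
  rw [Finset.sum_range_succ, ← sub_div]
  congr 1
  ring

section Var

variable {W I : ℤ → ℝ} {cW cI : ℝ}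

lemma Jterm_pos (hW : ∀ k, 0 < W k) (hI : ∀ k, 0 < I k) (k : ℤ) (m : ℕ) :
    0 < Jterm W I k m :=
  mul_pos (hW _) (Finset.prod_pos fun r _ => div_pos (hW _) (hI _))

lemma log_Jterm (hW : ∀ k, 0 < W k) (hI : ∀ k, 0 < I k) (k : ℤ) (m : ℕ) :
    Real.log (Jterm W I k m) = Real.log (W (k - (m : ℤ))) +
      ((∑ r ∈ Finset.range m, Real.log (W (k - (r : ℤ)))) -
       (∑ r ∈ Finset.range m, Real.log (I (k - (r : ℤ))))) := by
  unfold Jterm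
  rw [Real.log_mul (hW _).ne' (Finset.prod_pos fun r _ => div_pos (hW _) (hI _)).ne',
    Real.log_prod (fun r _ => (div_pos (hW _) (hI _)).ne'), ← Finset.sum_sub_distrib]
  congr 1
  exact Finset.sum_congr rfl fun r _ => Real.log_div (hW _).ne' (hI _).ne'


lemma log_Jterm_tendsto (hW : ∀ k, 0 < W k) (hI : ∀ k, 0 < I k)
    (hcW : cesaroLim W cW) (hcI : cesaroLim I cI) (k : ℤ) :
    Tendsto (fun m : ℕ => Real.log (Jterm W I k m) / (m : ℝ)) atTop (𝓝 (cW - cI)) := by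
  have h1 := shiftedCesaro_term hcW k
  have h2 := (shiftedCesaro hcW k).sub (shiftedCesaro hcI k)
  have h3 := h1.add h2
  rw [zero_add] at h3
  refine h3.congr fun m => ?_
  rw [log_Jterm hW hI, add_div, sub_div]

lemma Jterm_summable (hW : ∀ k, 0 < W k) (hI : ∀ k, 0 < I k)
    (hcW : cesaroLim W cW) (hcI : cesaroLim I cI) (hlt : cW < cI) (k : ℤ) :
    Summable (fun m => Jterm W I k m) := by
  set ε := (cI - cW) / 2 with hε_def
  have hε : 0 < ε := by simp [hε_def]; linarith
  have hlim := log_Jterm_tendsto hW hI hcW hcI k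
  have hev : ∀ᶠ m : ℕ in atTop, Real.log (Jterm W I k m) / (m : ℝ) < -ε := by
    apply hlim.eventually_lt_const
    rw [hε_def]; linarith
  obtain ⟨N, hN⟩ := (hev.and (eventually_gt_atTop 0)).exists_forall_of_atTop
  rw [← summable_nat_add_iff (N + 1)]
  have hr0 : (0:ℝ) ≤ Real.exp (-ε) := (Real.exp_pos _).le
  have hr1 : Real.exp (-ε) < 1 := Real.exp_lt_one_iff.2 (by linarith)
  refine Summable.of_nonneg_of_le (fun n => (Jterm_pos hW hI k _).le) (fun n => ?_)
    (((summable_geometric_of_lt_one hr0 hr1).mul_right (Real.exp (-ε) ^ (N + 1))).congr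
      fun n => by rw [← pow_add])
  obtain ⟨h1, h2⟩ := hN (n + (N + 1)) (by omega)
  have hmpos : (0:ℝ) < ((n + (N + 1) : ℕ) : ℝ) := by exact_mod_cast h2
  have h3 : Real.log (Jterm W I k (n + (N + 1))) < -ε * ((n + (N + 1) : ℕ) : ℝ) := by
    have := (div_lt_iff₀ hmpos).1 h1
    linarith
  calc Jterm W I k (n + (N + 1))
      = Real.exp (Real.log (Jterm W I k (n + (N + 1)))) :=
        (Real.exp_log (Jterm_pos hW hI k _)).symm
    _ ≤ Real.exp (((n + (N + 1) : ℕ) : ℝ) * (-ε)) := Real.exp_le_exp.2 (by linarith)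
    _ = Real.exp (-ε) ^ (n + (N + 1)) := Real.exp_nat_mul _ _

lemma Smap_pos (hW : ∀ k, 0 < W k) (hI : ∀ k, 0 < I k)
    (hsum : ∀ k, Summable (fun m => Jterm W I k m)) (k : ℤ) : 0 < Smap W I k :=
  Summable.tsum_pos (hsum k) (fun m => (Jterm_pos hW hI k m).le) 0 (Jterm_pos hW hI k 0)

lemma Jterm_succ (k : ℤ) (m : ℕ) :
    Jterm W I k (m + 1) = (W k / I k) * Jterm W I (k - 1) m := by
  unfold Jterm
  rw [Finset.prod_range_succ']
  push_cast
  rw [sub_zero]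
  rw [show k - ((m:ℤ) + 1) = k - 1 - (m:ℤ) by ring]
  rw [show (∏ x ∈ Finset.range m, (W (k - ((x:ℤ) + 1)) / I (k - ((x:ℤ) + 1))))
      = ∏ x ∈ Finset.range m, (W (k - 1 - (x:ℤ)) / I (k - 1 - (x:ℤ))) from
    Finset.prod_congr rfl fun x _ => by rw [show k - ((x:ℤ) + 1) = k - 1 - (x:ℤ) by ring]]
  ring

lemma Smap_rec (hsum : ∀ k, Summable (fun m => Jterm W I k m)) (k : ℤ) :
    Smap W I k = W k + (W k / I k) * Smap W I (k - 1) := by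
  unfold Smap
  rw [Summable.tsum_eq_zero_add (hsum k)]
  congr 1
  · simp [Jterm]
  · rw [← tsum_mul_left]
    exact tsum_congr fun m => Jterm_succ k m

end Var

end Aux

theorem stmt3 (W : ℤ → ℝ) (cW : ℝ) (hW : ∀ k, 0 < W k) (hcW : cesaroLim W cW) :
    (∀ (I : ℤ → ℝ) (cI : ℝ), (∀ k, 0 < I k) → cesaroLim I cI → cW < cI →
      (∀ k : ℤ, W k < Dmap W I k) ∧
      (∀ k : ℤ, I k =
        ((Dmap W I k - W k) / W k) *
          (W (k - 1) * Dmap W I (k - 1) / (Dmap W I (k - 1) - W (k - 1))))) ∧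
    (∀ (I I' : ℤ → ℝ) (cI cI' : ℝ), (∀ k, 0 < I k) → (∀ k, 0 < I' k) →
      cesaroLim I cI → cesaroLim I' cI' → cW < cI → cW < cI' →
      Dmap W I = Dmap W I' → I = I') := by
  have main : ∀ (I : ℤ → ℝ) (cI : ℝ), (∀ k, 0 < I k) → cesaroLim I cI → cW < cI →
      (∀ k : ℤ, W k < Dmap W I k) ∧
      (∀ k : ℤ, I k =
        ((Dmap W I k - W k) / W k) *
          (W (k - 1) * Dmap W I (k - 1) / (Dmap W I (k - 1) - W (k - 1)))) := by
    intro I cI hI hcI hlt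
    have hsum : ∀ k, Summable (fun m => Jterm W I k m) :=
      fun k => Jterm_summable hW hI hcW hcI hlt k
    have hS : ∀ k, 0 < Smap W I k := Smap_pos hW hI hsum
    have hDeq : ∀ k, Dmap W I k = W k + W k * I k / Smap W I (k - 1) := by
      intro k
      unfold Dmap
      rw [Smap_rec hsum k]
      have h1 : I k ≠ 0 := (hI k).ne'
      have h2 : Smap W I (k - 1) ≠ 0 := (hS (k - 1)).ne'
      field_simp
      ring
    constructor
    · intro k
      rw [hDeq k]
      have : 0 < W k * I k / Smap W I (k - 1) :=
        div_pos (mul_pos (hW k) (hI k)) (hS (k - 1))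
      linarith
    · intro k
      have h1 : W k ≠ 0 := (hW k).ne'
      have h2 : W (k - 1) ≠ 0 := (hW (k - 1)).ne'
      have h3 : I (k - 1) ≠ 0 := (hI (k - 1)).ne'
      have h4 : Smap W I (k - 1) ≠ 0 := (hS (k - 1)).ne'
      have h5 : Smap W I (k - 1 - 1) ≠ 0 := (hS (k - 1 - 1)).ne'
      rw [hDeq k, hDeq (k - 1)]
      rw [show W k + W k * I k / Smap W I (k - 1) - W k
          = W k * I k / Smap W I (k - 1) by ring]
      rw [show W (k - 1) + W (k - 1) * I (k - 1) / Smap W I (k - 1 - 1) - W (k - 1)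
          = W (k - 1) * I (k - 1) / Smap W I (k - 1 - 1) by ring]
      have hB : W (k - 1) * (W (k - 1) + W (k - 1) * I (k - 1) / Smap W I (k - 1 - 1)) /
          (W (k - 1) * I (k - 1) / Smap W I (k - 1 - 1)) = Smap W I (k - 1) := by
        rw [Smap_rec hsum (k - 1)]
        field_simp
        ring
      rw [hB]
      field_simp
  refine ⟨main, ?_⟩
  intro I I' cI cI' hI hI' hcI hcI' h h' hD
  funext k
  rw [(main I cI hI hcI h).2 k, (main I' cI' hI' hcI' h').2 k, hD]
end
end

section
/- Let (W,I) and (W,I') be pairs of positive sequences with 𝔠(W) < 𝔠(I) and 𝔠(W) < 𝔠(I'), and suppose I'_k ≥ I_k for all k ∈ ℤ. Then D(W,I')_k ≥ D(W,I)_k for all k. Moreover, if additionally I'_{k₀} > I_{k₀} for some k₀, then D(W,I')_k > D(W,I)_k for all k ≥ k₀. -/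
open Filter Topology

noncomputable section

/-! ### Auxiliary lemmas -/

private lemma aux_nat_div_succ : Filter.Tendsto (fun n : ℕ => (n : ℝ) / ((n : ℝ) + 1))
    Filter.atTop (nhds 1) := by
  have h := tendsto_one_div_add_atTop_nhds_zero_nat (𝕜 := ℝ)
  have h2 : Filter.Tendsto (fun n : ℕ => 1 - 1 / ((n : ℝ) + 1)) Filter.atTop (nhds (1 - 0)) :=
    tendsto_const_nhds.sub h
  rw [sub_zero] at h2
  refine h2.congr fun n => ?_
  have hn : (n : ℝ) + 1 ≠ 0 := by positivity
  field_simp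
  ring

private lemma aux_succ_div_nat : Filter.Tendsto (fun n : ℕ => ((n : ℝ) + 1) / (n : ℝ))
    Filter.atTop (nhds 1) := by
  have h := tendsto_one_div_atTop_nhds_zero_nat (𝕜 := ℝ)
  have h2 : Filter.Tendsto (fun n : ℕ => 1 + 1 / (n : ℝ)) Filter.atTop (nhds (1 + 0)) :=
    tendsto_const_nhds.add h
  rw [add_zero] at h2
  refine h2.congr' ?_
  filter_upwards [Filter.eventually_ge_atTop 1] with n hn
  have hn0 : (n : ℝ) ≠ 0 := Nat.cast_ne_zero.mpr (by omega)
  field_simp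

private lemma aux_const_div (a : ℝ) : Filter.Tendsto (fun n : ℕ => a / (n : ℝ))
    Filter.atTop (nhds 0) := by
  have h := tendsto_one_div_atTop_nhds_zero_nat (𝕜 := ℝ)
  have h2 : Filter.Tendsto (fun n : ℕ => a * (1 / (n : ℝ))) Filter.atTop (nhds (a * 0)) :=
    tendsto_const_nhds.mul h
  rw [mul_zero] at h2
  refine h2.congr fun n => ?_
  ring

private lemma aux_const_div_succ (a : ℝ) : Filter.Tendsto (fun n : ℕ => a / ((n : ℝ) + 1))
    Filter.atTop (nhds 0) := by
  have h := tendsto_one_div_add_atTop_nhds_zero_nat (𝕜 := ℝ)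
  have h2 : Filter.Tendsto (fun n : ℕ => a * (1 / ((n : ℝ) + 1))) Filter.atTop (nhds (a * 0)) :=
    tendsto_const_nhds.mul h
  rw [mul_zero] at h2
  refine h2.congr fun n => ?_
  ring

/-- Cesàro averages are invariant under shifting the base point. -/
private lemma ces_shift (f : ℤ → ℝ) (c : ℝ)
    (h : Filter.Tendsto (fun n : ℕ => (∑ j ∈ Finset.range n, f (-(j : ℤ))) / (n : ℝ))
      Filter.atTop (nhds c)) (k : ℤ) :
    Filter.Tendsto (fun n : ℕ => (∑ r ∈ Finset.range n, f (k - (r : ℤ))) / (n : ℝ))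
      Filter.atTop (nhds c) := by
  induction k using Int.induction_on with
  | zero =>
      refine h.congr fun n => ?_
      congr 1
      exact Finset.sum_congr rfl fun r _ => by rw [zero_sub]
  | succ k ih =>
      rw [← tendsto_add_atTop_iff_nat 1]
      have key : ∀ n : ℕ, (∑ r ∈ Finset.range (n + 1), f ((k : ℤ) + 1 - (r : ℤ)))
          = f ((k : ℤ) + 1) + ∑ r ∈ Finset.range n, f ((k : ℤ) - (r : ℤ)) := by
        intro n
        rw [Finset.sum_range_succ' (fun r : ℕ => f ((k : ℤ) + 1 - (r : ℤ))) n]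
        simp only [Nat.cast_add, Nat.cast_one, Nat.cast_zero, sub_zero]
        rw [add_comm]
        congr 1
        refine Finset.sum_congr rfl fun r _ => ?_
        congr 1
        ring
      have hmain : Filter.Tendsto (fun n : ℕ => f ((k : ℤ) + 1) / ((n : ℝ) + 1)
          + ((∑ r ∈ Finset.range n, f ((k : ℤ) - (r : ℤ))) / (n : ℝ)) * ((n : ℝ) / ((n : ℝ) + 1)))
          Filter.atTop (nhds c) := by
        have := (aux_const_div_succ (f ((k : ℤ) + 1))).add (ih.mul aux_nat_div_succ)
        simpa using this
      refine hmain.congr' ?_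
      filter_upwards [Filter.eventually_ge_atTop 1] with n hn
      have hn0 : (n : ℝ) ≠ 0 := Nat.cast_ne_zero.mpr (by omega)
      have hn1 : (n : ℝ) + 1 ≠ 0 := by positivity
      rw [key n]
      push_cast
      field_simp

  | pred k ih =>
      have key : ∀ n : ℕ, (∑ r ∈ Finset.range (n + 1), f (-(k : ℤ) - (r : ℤ)))
          = f (-(k : ℤ)) + ∑ r ∈ Finset.range n, f (-(k : ℤ) - 1 - (r : ℤ)) := by
        intro n
        rw [Finset.sum_range_succ' (fun r : ℕ => f (-(k : ℤ) - (r : ℤ))) n]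
        simp only [Nat.cast_add, Nat.cast_one, Nat.cast_zero, sub_zero]
        rw [add_comm]
        congr 1
        refine Finset.sum_congr rfl fun r _ => ?_
        congr 1
        ring
      have ih1 : Filter.Tendsto (fun n : ℕ =>
          (∑ r ∈ Finset.range (n + 1), f (-(k : ℤ) - (r : ℤ))) / ((n : ℝ) + 1))
          Filter.atTop (nhds c) := by
        have := ih.comp (tendsto_add_atTop_nat 1)
        refine this.congr fun n => ?_
        simp [Function.comp]


      have hmain : Filter.Tendsto (fun n : ℕ =>
          ((∑ r ∈ Finset.range (n + 1), f (-(k : ℤ) - (r : ℤ))) / ((n : ℝ) + 1))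
            * (((n : ℝ) + 1) / (n : ℝ)) - f (-(k : ℤ)) / (n : ℝ))
          Filter.atTop (nhds c) := by
        have := (ih1.mul aux_succ_div_nat).sub (aux_const_div (f (-(k : ℤ))))
        simpa using this
      refine hmain.congr' ?_
      filter_upwards [Filter.eventually_ge_atTop 1] with n hn
      have hn0 : (n : ℝ) ≠ 0 := Nat.cast_ne_zero.mpr (by omega)
      have hn1 : (n : ℝ) + 1 ≠ 0 := by positivity
      rw [key n]
      field_simp
      ring


/-- Single terms are `o(n)` when Cesàro averages converge. -/
private lemma ces_term (f : ℤ → ℝ) (c : ℝ) (k : ℤ)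
    (h : Filter.Tendsto (fun n : ℕ => (∑ r ∈ Finset.range n, f (k - (r : ℤ))) / (n : ℝ))
      Filter.atTop (nhds c)) :
    Filter.Tendsto (fun n : ℕ => f (k - (n : ℤ)) / (n : ℝ)) Filter.atTop (nhds 0) := by
  have h1 : Filter.Tendsto (fun n : ℕ =>
      (∑ r ∈ Finset.range (n + 1), f (k - (r : ℤ))) / ((n : ℝ) + 1))
      Filter.atTop (nhds c) := by
    have := h.comp (tendsto_add_atTop_nat 1)
    refine this.congr fun n => ?_
    simp [Function.comp]


  have hmain : Filter.Tendsto (fun n : ℕ =>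
      ((∑ r ∈ Finset.range (n + 1), f (k - (r : ℤ))) / ((n : ℝ) + 1)) * (((n : ℝ) + 1) / (n : ℝ))
        - (∑ r ∈ Finset.range n, f (k - (r : ℤ))) / (n : ℝ))
      Filter.atTop (nhds 0) := by
    have := (h1.mul aux_succ_div_nat).sub h
    simpa using this
  refine hmain.congr' ?_
  filter_upwards [Filter.eventually_ge_atTop 1] with n hn
  have hn0 : (n : ℝ) ≠ 0 := Nat.cast_ne_zero.mpr (by omega)
  have hn1 : (n : ℝ) + 1 ≠ 0 := by positivity
  rw [Finset.sum_range_succ]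
  field_simp
  ring


private lemma jterm_pos {W I : ℤ → ℝ} (hW : ∀ k, 0 < W k) (hI : ∀ k, 0 < I k) (k : ℤ) (m : ℕ) :
    0 < Jterm W I k m :=
  mul_pos (hW _) (Finset.prod_pos fun r _ => div_pos (hW _) (hI _))

private lemma summable_jterm (W I : ℤ → ℝ) (cW cI : ℝ) (hW : ∀ k, 0 < W k) (hI : ∀ k, 0 < I k)
    (hcW : cesaroLim W cW) (hcI : cesaroLim I cI) (h1 : cW < cI) (k : ℤ) :
    Summable (Jterm W I k) := by
  set ε : ℝ := (cI - cW) / 2 with hεdef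
  have hε : 0 < ε := by simp only [hεdef]; linarith
  have hlog : ∀ m : ℕ, Real.log (Jterm W I k m) = Real.log (W (k - (m : ℤ)))
      + ((∑ r ∈ Finset.range m, Real.log (W (k - (r : ℤ))))
        - ∑ r ∈ Finset.range m, Real.log (I (k - (r : ℤ)))) := by
    intro m
    unfold Jterm
    rw [Real.log_mul (hW _).ne' (Finset.prod_pos fun r _ => div_pos (hW _) (hI _)).ne',
      Real.log_prod (fun r _ => (div_pos (hW _) (hI _)).ne')]
    congr 1
    rw [← Finset.sum_sub_distrib]
    exact Finset.sum_congr rfl fun r _ => Real.log_div (hW _).ne' (hI _).ne'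
  have hWt := ces_shift (fun x => Real.log (W x)) cW hcW k
  have hIt := ces_shift (fun x => Real.log (I x)) cI hcI k
  have hterm := ces_term (fun x => Real.log (W x)) cW k hWt
  have hlim : Filter.Tendsto (fun m : ℕ => Real.log (Jterm W I k m) / (m : ℝ))
      Filter.atTop (nhds (cW - cI)) := by
    have := hterm.add (hWt.sub hIt)
    rw [zero_add] at this
    refine this.congr fun m => ?_
    rw [hlog m, add_div, sub_div]
  have hev : ∀ᶠ m : ℕ in Filter.atTop, Real.log (Jterm W I k m) / (m : ℝ) < -ε :=
    hlim.eventually_lt_const (by simp only [hεdef]; linarith)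
  obtain ⟨N, hN⟩ := (hev.and (Filter.eventually_ge_atTop 1)).exists_forall_of_atTop
  rw [← summable_nat_add_iff N]
  have hgeo : Summable (fun n : ℕ => Real.exp (-ε) ^ (n + N)) := by
    have hbase : Summable (fun n : ℕ => Real.exp (-ε) ^ n) :=
      summable_geometric_of_lt_one (Real.exp_nonneg _)
        (by rw [Real.exp_lt_one_iff]; linarith)
    have := hbase.mul_right (Real.exp (-ε) ^ N)
    refine this.congr fun n => ?_
    rw [pow_add]
  refine hgeo.of_nonneg_of_le (fun n => (jterm_pos hW hI k (n + N)).le) fun n => ?_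
  have hm := hN (n + N) (by omega)
  have hmpos : (0 : ℝ) < ((n + N : ℕ) : ℝ) := by
    have : 1 ≤ n + N := by omega
    exact_mod_cast Nat.lt_of_lt_of_le Nat.zero_lt_one this
  have hlt : Real.log (Jterm W I k (n + N)) < -ε * ((n + N : ℕ) : ℝ) :=
    (div_lt_iff₀ hmpos).mp hm.1
  have := Real.exp_lt_exp.mpr hlt
  rw [Real.exp_log (jterm_pos hW hI k (n + N))] at this
  calc Jterm W I k (n + N) ≤ Real.exp (-ε * ((n + N : ℕ) : ℝ)) := this.le
    _ = Real.exp (-ε) ^ (n + N) := by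
        rw [mul_comm, Real.exp_nat_mul]

private lemma smap_pos {W I : ℤ → ℝ} (hW : ∀ k, 0 < W k) (hI : ∀ k, 0 < I k)
    (hs : Summable (Jterm W I k)) : 0 < Smap W I k :=
  Summable.tsum_pos hs (fun m => (jterm_pos hW hI k m).le) 0 (jterm_pos hW hI k 0)

private lemma jterm_succ (W I : ℤ → ℝ) (k : ℤ) (n : ℕ) :
    Jterm W I k (n + 1) = W k / I k * Jterm W I (k - 1) n := by
  unfold Jterm
  rw [Finset.prod_range_succ' (fun r : ℕ => W (k - (r : ℤ)) / I (k - (r : ℤ))) n]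
  simp only [Nat.cast_add, Nat.cast_one, Nat.cast_zero, sub_zero]
  have e1 : ∀ r : ℕ, k - ((r : ℤ) + 1) = k - 1 - (r : ℤ) := fun r => by ring
  simp only [e1]
  ring

private lemma smap_rec {W I : ℤ → ℝ} (k : ℤ) (hs : Summable (Jterm W I k)) :
    Smap W I k = W k + W k / I k * Smap W I (k - 1) := by
  unfold Smap
  rw [Summable.tsum_eq_zero_add hs]
  congr 1
  · simp [Jterm]
  · rw [← tsum_mul_left]
    exact tsum_congr fun n => jterm_succ W I k n

private lemma dmap_eq {W I : ℤ → ℝ} (hW : ∀ k, 0 < W k) (hI : ∀ k, 0 < I k) (k : ℤ)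
    (hs : Summable (Jterm W I k)) (hs' : Summable (Jterm W I (k - 1))) :
    Dmap W I k = W k * I k / Smap W I (k - 1) + W k := by
  unfold Dmap
  rw [smap_rec k hs]
  have hJ : 0 < Smap W I (k - 1) := smap_pos hW hI hs'
  have hIk := hI k
  field_simp


private lemma jterm_anti {W I I' : ℤ → ℝ} (hW : ∀ k, 0 < W k) (hI : ∀ k, 0 < I k)
    (hle : ∀ k, I k ≤ I' k) (k : ℤ) (m : ℕ) :
    Jterm W I' k m ≤ Jterm W I k m := by
  unfold Jterm
  refine mul_le_mul_of_nonneg_left ?_ (hW _).le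
  refine Finset.prod_le_prod (fun r _ => ?_) (fun r _ => ?_)
  · have hI'r : 0 < I' (k - (r : ℤ)) := lt_of_lt_of_le (hI _) (hle _)
    exact (div_pos (hW _) hI'r).le
  · exact div_le_div_of_nonneg_left (hW _).le (hI _) (hle _)

private lemma smap_anti {W I I' : ℤ → ℝ} (hW : ∀ k, 0 < W k) (hI : ∀ k, 0 < I k)
    (hle : ∀ k, I k ≤ I' k) (k : ℤ)
    (hs : Summable (Jterm W I k)) (hs' : Summable (Jterm W I' k)) :
    Smap W I' k ≤ Smap W I k :=
  Summable.tsum_le_tsum (fun m => jterm_anti hW hI hle k m) hs' hs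

private lemma smap_strict_anti {W I I' : ℤ → ℝ} (hW : ∀ k, 0 < W k) (hI : ∀ k, 0 < I k)
    (hle : ∀ k, I k ≤ I' k) (k₀ k : ℤ) (hk : k₀ ≤ k) (hlt : I k₀ < I' k₀)
    (hs : Summable (Jterm W I k)) (hs' : Summable (Jterm W I' k)) :
    Smap W I' k < Smap W I k := by
  set m₀ : ℕ := (k - k₀).toNat with hm₀def
  have hm₀ : (m₀ : ℤ) = k - k₀ := Int.toNat_of_nonneg (by omega)
  refine Summable.tsum_lt_tsum (fun m => jterm_anti hW hI hle k m) (i := m₀ + 1) ?_ hs' hs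
  unfold Jterm
  refine mul_lt_mul_of_pos_left ?_ (hW _)
  refine Finset.prod_lt_prod (fun r _ => ?_) (fun r _hr => ?_) ⟨m₀, Finset.self_mem_range_succ m₀, ?_⟩
  · have hI'r : 0 < I' (k - (r : ℤ)) := lt_of_lt_of_le (hI _) (hle _)
    exact div_pos (hW _) hI'r
  · exact div_le_div_of_nonneg_left (hW _).le (hI _) (hle _)
  · have hk₀ : k - (m₀ : ℤ) = k₀ := by omega
    rw [hk₀]
    exact div_lt_div_of_pos_left (hW k₀) (hI k₀) hlt

theorem stmt4 (W I I' : ℤ → ℝ) (cW cI cI' : ℝ)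
    (hW : ∀ k, 0 < W k) (hI : ∀ k, 0 < I k) (hI' : ∀ k, 0 < I' k)
    (hcW : cesaroLim W cW) (hcI : cesaroLim I cI) (hcI' : cesaroLim I' cI')
    (h1 : cW < cI) (h2 : cW < cI')
    (hle : ∀ k, I k ≤ I' k) :
    (∀ k : ℤ, Dmap W I k ≤ Dmap W I' k) ∧
    (∀ k₀ : ℤ, I k₀ < I' k₀ → ∀ k : ℤ, k₀ ≤ k → Dmap W I k < Dmap W I' k) := by
  have hsI : ∀ k, Summable (Jterm W I k) := summable_jterm W I cW cI hW hI hcW hcI h1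
  have hsI' : ∀ k, Summable (Jterm W I' k) := summable_jterm W I' cW cI' hW hI' hcW hcI' h2
  have hSpos : ∀ k, 0 < Smap W I k := fun k => smap_pos hW hI (hsI k)
  have hSpos' : ∀ k, 0 < Smap W I' k := fun k => smap_pos hW hI' (hsI' k)
  have hD : ∀ k, Dmap W I k = W k * I k / Smap W I (k - 1) + W k :=
    fun k => dmap_eq hW hI k (hsI k) (hsI (k - 1))
  have hD' : ∀ k, Dmap W I' k = W k * I' k / Smap W I' (k - 1) + W k :=
    fun k => dmap_eq hW hI' k (hsI' k) (hsI' (k - 1))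
  have hmono : ∀ k, Smap W I' k ≤ Smap W I k :=
    fun k => smap_anti hW hI hle k (hsI k) (hsI' k)
  constructor
  · intro k
    rw [hD k, hD' k]
    have hnum : W k * I k ≤ W k * I' k := mul_le_mul_of_nonneg_left (hle k) (hW k).le
    have := div_le_div₀ (mul_pos (hW k) (hI' k)).le hnum (hSpos' (k - 1)) (hmono (k - 1))
    linarith
  · intro k₀ hlt k hk
    rw [hD k, hD' k]
    have hnum : W k * I k ≤ W k * I' k := mul_le_mul_of_nonneg_left (hle k) (hW k).le
    rcases eq_or_lt_of_le hk with rfl | hklt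
    · -- k = k₀
      have hnum' : W k₀ * I k₀ < W k₀ * I' k₀ := mul_lt_mul_of_pos_left hlt (hW k₀)
      have := div_lt_div₀ hnum' (hmono (k₀ - 1)) (mul_pos (hW k₀) (hI' k₀)).le (hSpos' (k₀ - 1))
      linarith
    · -- k₀ < k : strict denominator
      have hstrict : Smap W I' (k - 1) < Smap W I (k - 1) :=
        smap_strict_anti hW hI hle k₀ (k - 1) (by omega) hlt (hsI (k - 1)) (hsI' (k - 1))
      have step1 : W k * I k / Smap W I (k - 1) ≤ W k * I' k / Smap W I (k - 1) :=
        div_le_div₀ (mul_pos (hW k) (hI' k)).le hnum (hSpos (k - 1)) le_rfl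
      have step2 : W k * I' k / Smap W I (k - 1) < W k * I' k / Smap W I' (k - 1) :=
        div_lt_div_of_pos_left (mul_pos (hW k) (hI' k)) (hSpos' (k - 1)) hstrict
      linarith
end
end

section
/- Suppose (W,I) is a pair of positive sequences with finite Cesàro limits 𝔠(W) < 𝔠(I). If a positive sequence Ĵ = (Ĵ_k)_{k∈ℤ} satisfies the recursion Ĵ_k = W_k (1 + Ĵ_{k-1}/I_k) for all k ∈ ℤ and the subexponential growth condition liminf_{k→-∞} (log Ĵ_k)/|k| ≤ 0, then Ĵ_k = S(W,I)_k = Σ_{i≤k} W_i ∏_{j=i+1}^{k}(W_j/I_j) for all k. -/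
open Filter Topology

noncomputable section

lemma aux_up (S : ℕ → ℝ) (c C : ℝ) (h : Filter.Tendsto (fun n : ℕ => S n / n) atTop (𝓝 c)) :
    Filter.Tendsto (fun n : ℕ => (S n + C) / ((n : ℝ) + 1)) atTop (𝓝 c) := by
  have h1 : Filter.Tendsto (fun n : ℕ => (S n / n) * ((n : ℝ) / ((n:ℝ) + 1)) + C / ((n:ℝ) + 1))
      atTop (𝓝 (c * 1 + 0)) := by
    refine Filter.Tendsto.add (Filter.Tendsto.mul h (tendsto_natCast_div_add_atTop (1:ℝ))) ?_
    have := (tendsto_const_div_atTop_nhds_zero_nat C).comp (tendsto_add_atTop_nat 1)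
    simpa [Function.comp_def] using this
  rw [show c = c * 1 + 0 by ring]
  apply h1.congr'
  filter_upwards [eventually_ge_atTop 1] with n hn
  have hn' : (n : ℝ) ≠ 0 := by positivity
  field_simp

lemma aux_down (S : ℕ → ℝ) (c C : ℝ) (h : Filter.Tendsto (fun n : ℕ => S n / n) atTop (𝓝 c)) :
    Filter.Tendsto (fun n : ℕ => (S (n + 1) - C) / (n : ℝ)) atTop (𝓝 c) := by
  have h2 : Filter.Tendsto (fun n : ℕ => S (n+1) / ((n:ℝ)+1)) atTop (𝓝 c) := by
    have := h.comp (tendsto_add_atTop_nat 1)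
    simpa [Function.comp_def] using this
  have h1 : Filter.Tendsto (fun n : ℕ => (S (n+1) / ((n:ℝ)+1)) * (((n:ℝ)+1) / (n:ℝ)) - C / (n:ℝ))
      atTop (𝓝 (c * 1 - 0)) := by
    refine Filter.Tendsto.sub (Filter.Tendsto.mul h2 ?_) (tendsto_const_div_atTop_nhds_zero_nat C)
    have : Filter.Tendsto (fun n : ℕ => 1 + 1/(n:ℝ)) atTop (𝓝 (1 + 0)) :=
      Filter.Tendsto.add tendsto_const_nhds tendsto_one_div_atTop_nhds_zero_nat
    apply (by simpa using this : Filter.Tendsto (fun n : ℕ => 1 + 1/(n:ℝ)) atTop (𝓝 1)).congr'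
    filter_upwards [eventually_ge_atTop 1] with n hn
    have hn' : (n : ℝ) ≠ 0 := by positivity
    field_simp
  rw [show c = c * 1 - 0 by ring]
  apply h1.congr'
  filter_upwards [eventually_ge_atTop 1] with n hn
  have hn' : (n : ℝ) ≠ 0 := by positivity
  field_simp

lemma cesaro_shift (X : ℤ → ℝ) (c : ℝ) (h : cesaroLim X c) (k : ℤ) :
    Filter.Tendsto (fun n : ℕ => (∑ r ∈ Finset.range n, Real.log (X (k - (r : ℤ)))) / (n : ℝ))
      atTop (𝓝 c) := by
  induction k using Int.induction_on with
  | zero => simpa [zero_sub, cesaroLim] using h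
  | succ k ih =>
      rw [← tendsto_add_atTop_iff_nat 1]
      have key : ∀ n : ℕ, (∑ r ∈ Finset.range (n+1), Real.log (X ((k+1:ℤ) - (r : ℤ)))) =
          (∑ r ∈ Finset.range n, Real.log (X ((k:ℤ) - (r : ℤ)))) + Real.log (X (k+1)) := by
        intro n
        rw [Finset.sum_range_succ' (fun r : ℕ => Real.log (X ((k+1:ℤ) - (r : ℤ)))) n]
        simp only [Nat.cast_add, Nat.cast_one, Nat.cast_zero, sub_zero]
        congr 1
        refine Finset.sum_congr rfl fun r _ => ?_
        congr 2
        ring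
      have := aux_up (fun n => ∑ r ∈ Finset.range n, Real.log (X ((k:ℤ) - (r : ℤ)))) c
        (Real.log (X (k+1))) ih
      apply this.congr
      intro n
      rw [← key n]
      push_cast
      ring
  | pred k ih =>
      have key : ∀ n : ℕ, (∑ r ∈ Finset.range n, Real.log (X ((-k-1:ℤ) - (r : ℤ)))) =
          (∑ r ∈ Finset.range (n+1), Real.log (X ((-k:ℤ) - (r : ℤ)))) - Real.log (X (-k)) := by
        intro n
        rw [Finset.sum_range_succ' (fun r : ℕ => Real.log (X ((-k:ℤ) - (r : ℤ)))) n]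
        simp only [Nat.cast_add, Nat.cast_one, Nat.cast_zero, sub_zero]
        rw [add_sub_cancel_right]
        refine Finset.sum_congr rfl fun r _ => ?_
        congr 2
        ring
      have := aux_down (fun n => ∑ r ∈ Finset.range n, Real.log (X ((-k:ℤ) - (r : ℤ)))) c
        (Real.log (X (-k))) ih
      apply this.congr
      intro n
      rw [← key n]

theorem stmt5 (W I Jhat : ℤ → ℝ) (cW cI : ℝ)
    (hW : ∀ k, 0 < W k) (hI : ∀ k, 0 < I k)
    (hcW : cesaroLim W cW) (hcI : cesaroLim I cI) (hlt : cW < cI)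
    (hJpos : ∀ k, 0 < Jhat k)
    (hrec : ∀ k : ℤ, Jhat k = W k * (1 + Jhat (k - 1) / I k))
    (hgrow : Filter.liminf (fun n : ℕ => Real.log (Jhat (-(n : ℤ))) / (n : ℝ))
        Filter.atTop ≤ 0) :
    ∀ k : ℤ, Jhat k = Smap W I k := by
  -- upper bound on the growth of Jhat to the left
  have hub : ∀ n : ℕ, Jhat (-(n:ℤ)) ≤ Jhat 0 * ∏ r ∈ Finset.range n, (I (-(r:ℤ)) / W (-(r:ℤ))) := by
    intro n
    induction n with
    | zero => simp
    | succ n ih =>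
        have h1 := hrec (-(n:ℤ))
        have hstep : Jhat (-(n:ℤ) - 1) ≤ (I (-(n:ℤ)) / W (-(n:ℤ))) * Jhat (-(n:ℤ)) := by
          have hWp := hW (-(n:ℤ)); have hIp := hI (-(n:ℤ))
          have h2 : Jhat (-(n:ℤ) - 1) / I (-(n:ℤ)) ≤ Jhat (-(n:ℤ)) / W (-(n:ℤ)) := by
            rw [h1, mul_div_cancel_left₀ _ hWp.ne']
            linarith
          calc Jhat (-(n:ℤ) - 1) = (Jhat (-(n:ℤ) - 1) / I (-(n:ℤ))) * I (-(n:ℤ)) := by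
                field_simp
            _ ≤ (Jhat (-(n:ℤ)) / W (-(n:ℤ))) * I (-(n:ℤ)) := by
                exact mul_le_mul_of_nonneg_right h2 hIp.le
            _ = (I (-(n:ℤ)) / W (-(n:ℤ))) * Jhat (-(n:ℤ)) := by ring
        have hcast : (-(↑(n+1):ℤ)) = -(n:ℤ) - 1 := by push_cast; ring
        rw [hcast, Finset.prod_range_succ]
        calc Jhat (-(n:ℤ) - 1) ≤ (I (-(n:ℤ)) / W (-(n:ℤ))) * Jhat (-(n:ℤ)) := hstep
          _ ≤ (I (-(n:ℤ)) / W (-(n:ℤ))) * (Jhat 0 * ∏ r ∈ Finset.range n, (I (-(r:ℤ)) / W (-(r:ℤ)))) := by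
              exact mul_le_mul_of_nonneg_left ih (div_pos (hI _) (hW _)).le
          _ = Jhat 0 * ((∏ r ∈ Finset.range n, (I (-(r:ℤ)) / W (-(r:ℤ)))) * (I (-(n:ℤ)) / W (-(n:ℤ)))) := by
              ring
  -- boundedness above of the liminf sequence
  have hBtend : Filter.Tendsto
      (fun n : ℕ => (Real.log (Jhat 0) + ∑ r ∈ Finset.range n,
        (Real.log (I (-(r:ℤ))) - Real.log (W (-(r:ℤ))))) / (n:ℝ)) atTop (𝓝 (cI - cW)) := by
    have hIt := cesaro_shift I cI hcI 0
    have hWt := cesaro_shift W cW hcW 0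
    have hc := tendsto_const_div_atTop_nhds_zero_nat (Real.log (Jhat 0))
    have := (hc.add (hIt.sub hWt))
    rw [zero_add] at this
    apply this.congr
    intro n
    rw [Finset.sum_sub_distrib]
    simp only [zero_sub]
    ring
  have hbdd : Filter.IsBoundedUnder (· ≤ ·) atTop
      (fun n : ℕ => Real.log (Jhat (-(n : ℤ))) / (n : ℝ)) := by
    refine ⟨cI - cW + 1, ?_⟩
    rw [Filter.eventually_map]
    have hev := hBtend.eventually (eventually_le_nhds (by linarith : cI - cW < cI - cW + 1))
    filter_upwards [hev, eventually_ge_atTop 1] with n h1 h2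
    have hn' : (0:ℝ) < n := by exact_mod_cast h2
    refine le_trans ?_ h1
    have hlog : Real.log (Jhat (-(n:ℤ))) ≤ Real.log (Jhat 0) +
        ∑ r ∈ Finset.range n, (Real.log (I (-(r:ℤ))) - Real.log (W (-(r:ℤ)))) := by
      have hl := Real.log_le_log (hJpos _) (hub n)
      rw [Real.log_mul (hJpos 0).ne' (Finset.prod_pos fun r _ => div_pos (hI _) (hW _)).ne',
        Real.log_prod (fun r _ => (div_pos (hI _) (hW _)).ne')] at hl
      refine hl.trans (le_of_eq ?_)
      congr 1
      exact Finset.sum_congr rfl fun r _ => Real.log_div (hI _).ne' (hW _).ne'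
    gcongr
  intro k
  have hiter : ∀ n : ℕ, Jhat k = (∑ m ∈ Finset.range n, Jterm W I k m) +
      (∏ r ∈ Finset.range n, (W (k - (r:ℤ)) / I (k - (r:ℤ)))) * Jhat (k - (n:ℤ)) := by
    intro n
    induction n with
    | zero => simp
    | succ n ih =>
        have hcast : k - ((n+1:ℕ):ℤ) = (k - (n:ℤ)) - 1 := by push_cast; ring
        rw [Finset.sum_range_succ, Finset.prod_range_succ, hcast]
        have hexp : Jhat (k - (n:ℤ)) = W (k - (n:ℤ)) +
            (W (k - (n:ℤ)) / I (k - (n:ℤ))) * Jhat (k - (n:ℤ) - 1) := by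
          rw [hrec (k - (n:ℤ))]
          ring
        rw [ih, hexp]
        simp only [Jterm]
        ring
  have hPpos : ∀ n : ℕ, 0 < ∏ r ∈ Finset.range n, (W (k - (r:ℤ)) / I (k - (r:ℤ))) :=
    fun n => Finset.prod_pos fun r _ => div_pos (hW _) (hI _)
  have htermpos : ∀ m : ℕ, 0 < Jterm W I k m :=
    fun m => mul_pos (hW _) (Finset.prod_pos fun r _ => div_pos (hW _) (hI _))
  have hsumle : ∀ n : ℕ, ∑ m ∈ Finset.range n, Jterm W I k m ≤ Jhat k := by
    intro n
    have h := hiter n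
    nlinarith [mul_pos (hPpos n) (hJpos (k - (n:ℤ)))]
  have hsummable : Summable (Jterm W I k) :=
    summable_of_sum_range_le (fun m => (htermpos m).le) hsumle
  have htend : Filter.Tendsto (fun n : ℕ => ∑ m ∈ Finset.range n, Jterm W I k m) atTop
      (𝓝 (Smap W I k)) := hsummable.hasSum.tendsto_sum_nat
  have hPJ : Filter.Tendsto
      (fun n : ℕ => (∏ r ∈ Finset.range n, (W (k - (r:ℤ)) / I (k - (r:ℤ)))) * Jhat (k - (n:ℤ)))
      atTop (𝓝 (Jhat k - Smap W I k)) := by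
    have h := (tendsto_const_nhds (x := Jhat k) (f := atTop)).sub htend
    apply h.congr
    intro n
    have := hiter n; linarith
  have hL0 : 0 ≤ Jhat k - Smap W I k :=
    ge_of_tendsto' hPJ fun n => (mul_pos (hPpos n) (hJpos _)).le
  by_contra hne
  have hL : 0 < Jhat k - Smap W I k := lt_of_le_of_ne hL0 (fun h => hne (by linarith))
  set δ := (cI - cW)/4 with hδ
  have hδpos : 0 < δ := by rw [hδ]; linarith
  have hPlog : ∀ n : ℕ, Real.log (∏ r ∈ Finset.range n, (W (k-(r:ℤ))/I (k-(r:ℤ)))) =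
      (∑ r ∈ Finset.range n, Real.log (W (k-(r:ℤ)))) -
      (∑ r ∈ Finset.range n, Real.log (I (k-(r:ℤ)))) := by
    intro n
    rw [Real.log_prod (fun r _ => (div_pos (hW _) (hI _)).ne'), ← Finset.sum_sub_distrib]
    exact Finset.sum_congr rfl fun r _ => Real.log_div (hW _).ne' (hI _).ne'
  have hPtend : Filter.Tendsto
      (fun n : ℕ => Real.log (∏ r ∈ Finset.range n, (W (k-(r:ℤ))/I (k-(r:ℤ)))) / n)
      atTop (𝓝 (cW - cI)) := by
    have h := (cesaro_shift W cW hcW k).sub (cesaro_shift I cI hcI k)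
    apply h.congr
    intro n
    rw [hPlog n]; ring
  have hev1 : ∀ᶠ n : ℕ in atTop, (Jhat k - Smap W I k)/2 ≤
      (∏ r ∈ Finset.range n, (W (k-(r:ℤ))/I (k-(r:ℤ)))) * Jhat (k - (n:ℤ)) :=
    hPJ.eventually (eventually_ge_nhds (by linarith))
  have hev2 : ∀ᶠ n : ℕ in atTop,
      Real.log (∏ r ∈ Finset.range n, (W (k-(r:ℤ))/I (k-(r:ℤ)))) / n ≤ cW - cI + δ :=
    hPtend.eventually (eventually_le_nhds (by linarith))
  have hev3 : ∀ᶠ n : ℕ in atTop, -δ ≤ Real.log ((Jhat k - Smap W I k)/2) / n :=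
    (tendsto_const_div_atTop_nhds_zero_nat (Real.log ((Jhat k - Smap W I k)/2))).eventually
      (eventually_ge_nhds (by linarith))
  have hev : ∀ᶠ n : ℕ in atTop, 2*δ*n ≤ Real.log (Jhat (k - (n:ℤ))) := by
    filter_upwards [hev1, hev2, hev3, eventually_ge_atTop 1] with n h1 h2 h3 h4
    have hn' : (0:ℝ) < n := by exact_mod_cast h4
    have hPn := hPpos n
    have hJn := hJpos (k - (n:ℤ))
    have hlog1 : Real.log ((Jhat k - Smap W I k)/2) ≤
        Real.log (∏ r ∈ Finset.range n, (W (k-(r:ℤ))/I (k-(r:ℤ)))) +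
        Real.log (Jhat (k-(n:ℤ))) := by
      rw [← Real.log_mul hPn.ne' hJn.ne']
      exact Real.log_le_log (by linarith) h1
    have hlogP : Real.log (∏ r ∈ Finset.range n, (W (k-(r:ℤ))/I (k-(r:ℤ)))) ≤
        (cW - cI + δ) * n := (div_le_iff₀ hn').mp h2
    have hlogL : -δ * n ≤ Real.log ((Jhat k - Smap W I k)/2) := by
      have := (le_div_iff₀ hn').mp h3
      linarith
    have hcd : cI - cW = 4*δ := by rw [hδ]; ring
    nlinarith
  obtain ⟨N, hN⟩ := eventually_atTop.mp hev
  have hev' : ∀ᶠ m : ℕ in atTop, δ ≤ Real.log (Jhat (-(m:ℤ))) / m := by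
    filter_upwards [eventually_ge_atTop (N + k.natAbs), eventually_ge_atTop (2 * k.natAbs),
      eventually_ge_atTop 1] with m h1 h2 h3
    set n := ((m:ℤ) + k).toNat with hndef
    have hnN : N ≤ n := by omega
    have hkey := hN n hnN
    have hidx : k - (n:ℤ) = -(m:ℤ) := by omega
    rw [hidx] at hkey
    have hm' : (0:ℝ) < m := by exact_mod_cast h3
    rw [le_div_iff₀ hm']
    have hnm : (m:ℝ) ≤ 2 * n := by exact_mod_cast (by omega : (m:ℤ) ≤ 2 * n)
    have hn0 : (0:ℝ) ≤ (n:ℝ) := by positivity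
    nlinarith
  have hcob : Filter.IsCoboundedUnder (· ≥ ·) atTop
      (fun n : ℕ => Real.log (Jhat (-(n:ℤ))) / n) := hbdd.isCoboundedUnder_ge
  have hfin : δ ≤ Filter.liminf (fun n : ℕ => Real.log (Jhat (-(n:ℤ))) / n) atTop :=
    Filter.le_liminf_of_le hcob hev'
  linarith
end
end
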